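/- Let τ = (1 + √5)/2, let Λ = Σ^{[0,τ²)} = { a + bτ : a, b ∈ ℤ, a − b/τ ∈ [0, τ²) } be enumerated increasingly by λ_k = (⌈k/τ⌉ + kτ)/τ². Then for every m ∈ ℤ: λ_m ∈ τ²Λ if and only if λ_m − λ_{m−1} = 1/τ. Equivalently, τ²Λ = Λ_S + 1/τ, where Λ_S = { λ_k : λ_{k+1} − λ_k = 1/τ } is the set of left-hand ends of tiles S; and consequently { λ_n : λ_{n+1} ∉ τ²Λ } = { λ_n : λ_{n+1} − λ_n = 1 } = Λ_L, the set of left-hand ends of tiles L. -/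

import Mathlib

open MeasureTheory Set Filter

noncomputable section

/-- The golden mean `τ = (1 + √5)/2`. -/
def tau : ℝ := (1 + Real.sqrt 5) / 2

/-- The cut-and-project model set `Σ^Ω = { a + bτ : a, b ∈ ℤ, a - b/τ ∈ Ω }`. -/
def SigmaSet (Ω : Set ℝ) : Set ℝ :=
  {x | ∃ a b : ℤ, x = (a : ℝ) + (b : ℝ) * tau ∧ (a : ℝ) - (b : ℝ) / tau ∈ Ω}

/-- The increasing enumeration `λ_k = (⌈k/τ⌉ + kτ)/τ²` of the rescaled Fibonacci
chain `Σ^{[0,τ²)}`. -/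
def fibChain (k : ℤ) : ℝ := ((⌈(k : ℝ) / tau⌉ : ℝ) + (k : ℝ) * tau) / tau ^ 2

/-!
Write `x = a + bτ ∈ ℤ[τ]` with star coordinate `x* = a - b/τ`. Then
`λ_k* = τ²(⌈k/τ⌉ - k/τ) ∈ [0, τ²)`, and multiplication by the unit `τ²` divides star
coordinates by `τ²`, so `τ²Λ = Σ^{[0,1)}`. A step `λ_k → λ_{k+1}` is a tile `S`
(gap `1/τ`) when `⌈k/τ⌉` does not jump, and then the star coordinate moves by `-τ`;
otherwise it is a tile `L` and the star coordinate moves by `+1`. As `τ² - τ = 1`, the star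
coordinate of `λ_{k+1}` lies in `[0, 1)` after an `S` step and in `[1, τ²)` after an `L` step.
-/

theorem tau_eq_goldenRatio : tau = Real.goldenRatio := rfl

theorem tau_sq : tau ^ 2 = tau + 1 := Real.goldenRatio_sq

theorem tau_pos : 0 < tau := Real.goldenRatio_pos

theorem one_lt_tau : 1 < tau := Real.one_lt_goldenRatio

theorem inv_tau : tau⁻¹ = tau - 1 := by
  rw [tau_eq_goldenRatio, Real.inv_goldenRatio, ← Real.one_sub_goldenConj]
  ring

theorem int_add_int_mul_tau_injective {a b a' b' : ℤ}
    (h : (a : ℝ) + b * tau = a' + b' * tau) : a = a' ∧ b = b' := by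
  obtain rfl : b = b' := by
    by_contra hb
    have hb' : ((b : ℝ) - b') ≠ 0 := sub_ne_zero.mpr (by exact_mod_cast hb)
    refine Real.goldenRatio_irrational ⟨(a' - a : ℚ) / (b - b' : ℚ), ?_⟩
    push_cast
    rw [div_eq_iff hb', ← tau_eq_goldenRatio]
    linarith
  exact ⟨by exact_mod_cast (by linarith : (a : ℝ) = a'), rfl⟩

theorem add_mul_tau_mem_sigmaSet_iff {Ω : Set ℝ} (a b : ℤ) :
    (a : ℝ) + b * tau ∈ SigmaSet Ω ↔ (a : ℝ) - b / tau ∈ Ω := by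
  refine ⟨?_, fun h => ⟨a, b, rfl, h⟩⟩
  rintro ⟨a', b', h, hΩ⟩
  obtain ⟨rfl, rfl⟩ := int_add_int_mul_tau_injective h
  exact hΩ

theorem sigmaSet_mono {Ω Ω' : Set ℝ} (h : Ω ⊆ Ω') : SigmaSet Ω ⊆ SigmaSet Ω' :=
  fun _ ⟨a, b, hx, hΩ⟩ => ⟨a, b, hx, h hΩ⟩

theorem image_tau_sq_mul_sigmaSet (Ω : Set ℝ) :
    (fun x => tau ^ 2 * x) '' SigmaSet Ω = SigmaSet ((· * tau ^ 2) ⁻¹' Ω) := by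
  have hτ := tau_pos.ne'
  ext y
  constructor
  · rintro ⟨_, ⟨a, b, rfl, hΩ⟩, rfl⟩
    refine ⟨a + b, a + 2 * b, ?_, ?_⟩
    · push_cast
      linear_combination ((a : ℝ) + b * tau + b) * tau_sq
    · rw [mem_preimage]
      convert hΩ using 1
      field_simp
      push_cast
      linear_combination (((a : ℝ) + b) * tau - b) * tau_sq
  · rintro ⟨a, b, rfl, hΩ⟩
    refine ⟨(2 * a - b : ℤ) + (b - a : ℤ) * tau,
      (add_mul_tau_mem_sigmaSet_iff _ _).mpr ?_, ?_⟩
    · rw [mem_preimage] at hΩ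
      convert hΩ using 1
      field_simp
      push_cast
      linear_combination ((b : ℝ) - a - a * tau) * tau_sq
    · push_cast
      linear_combination ((b - a : ℝ) * tau + a) * tau_sq

theorem ceil_add_eq_or_of_le_one {α : Type*} [Ring α] [LinearOrder α] [IsStrictOrderedRing α]
    [FloorRing α] (x : α) {h : α} (h₀ : 0 ≤ h) (h₁ : h ≤ 1) :
    ⌈x + h⌉ = ⌈x⌉ ∨ ⌈x + h⌉ = ⌈x⌉ + 1 := by
  have hlo : ⌈x⌉ ≤ ⌈x + h⌉ := Int.ceil_mono (le_add_of_nonneg_right h₀)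
  have hhi : ⌈x + h⌉ ≤ ⌈x⌉ + 1 :=
    (Int.ceil_mono (add_le_add_right h₁ x)).trans (Int.ceil_add_one x).le
  omega

/-- `λ_k*`, the star coordinate `a - b/τ` of `λ_k = a + bτ`. -/
def fibStar (k : ℤ) : ℝ := tau ^ 2 * (⌈(k : ℝ) / tau⌉ - k / tau)

theorem fibStar_nonneg (k : ℤ) : 0 ≤ fibStar k :=
  mul_nonneg (sq_nonneg tau) (sub_nonneg.mpr (Int.le_ceil _))

theorem fibStar_lt_tau_sq (k : ℤ) : fibStar k < tau ^ 2 :=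
  mul_lt_of_lt_one_right (pow_pos tau_pos 2)
    (by linarith [Int.ceil_lt_add_one ((k : ℝ) / tau)])

theorem fibChain_eq_add_mul_tau (k : ℤ) :
    fibChain k =
      ((2 * ⌈(k : ℝ) / tau⌉ - k : ℤ) : ℝ) + ((k - ⌈(k : ℝ) / tau⌉ : ℤ) : ℝ) * tau := by
  rw [fibChain, div_eq_iff (pow_pos tau_pos 2).ne']
  push_cast
  set c := ⌈(k : ℝ) / tau⌉
  linear_combination (-((c : ℝ) + (k - c) * tau)) * tau_sq

theorem fibChain_mem_sigmaSet_iff {Ω : Set ℝ} (k : ℤ) :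
    fibChain k ∈ SigmaSet Ω ↔ fibStar k ∈ Ω := by
  rw [fibChain_eq_add_mul_tau, add_mul_tau_mem_sigmaSet_iff]
  convert Iff.rfl using 2
  rw [fibStar]
  set c := ⌈(k : ℝ) / tau⌉
  rw [div_eq_mul_inv, div_eq_mul_inv, inv_tau]
  push_cast
  linear_combination ((c : ℝ) - k * tau) * tau_sq

theorem fibChain_succ_cases (k : ℤ) :
    (fibChain (k + 1) - fibChain k = 1 / tau ∧ fibStar (k + 1) = fibStar k - tau) ∨
      (fibChain (k + 1) - fibChain k = 1 ∧ fibStar (k + 1) = fibStar k + 1) := by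
  have hk : ((k + 1 : ℤ) : ℝ) / tau = k / tau + tau⁻¹ := by push_cast; ring
  have hτ := tau_pos.ne'
  unfold fibChain fibStar
  rw [hk]
  rcases ceil_add_eq_or_of_le_one ((k : ℝ) / tau) (inv_nonneg.mpr tau_pos.le)
    (inv_le_one_of_one_le₀ one_lt_tau.le) with h | h <;> rw [h]
  · left
    constructor
    · field_simp
      push_cast
      ring
    · field_simp
      ring
  · right
    push_cast
    constructor
    · field_simp
      linear_combination -tau_sq
    · rw [inv_tau]
      linear_combination (1 - tau) * tau_sq

theorem image_tau_sq_mul_sigmaSet_Ico_tau_sq :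
    (fun x => tau ^ 2 * x) '' SigmaSet (Ico 0 (tau ^ 2)) = SigmaSet (Ico 0 1) := by
  rw [image_tau_sq_mul_sigmaSet]
  congr 1
  ext y
  have h := pow_pos tau_pos 2
  rw [mem_preimage, mem_Ico, mem_Ico, mul_nonneg_iff_of_pos_right h, mul_lt_iff_lt_one_left h]

theorem exists_fibChain_eq {x : ℝ} (hx : x ∈ SigmaSet (Ico 0 (tau ^ 2))) :
    ∃ k, fibChain k = x := by
  obtain ⟨a, b, rfl, h₀, h₁⟩ := hx
  have hstar :
      ((a + b : ℤ) : ℝ) - ((a + 2 * b : ℤ) : ℝ) / tau = ((a : ℝ) - b / tau) / tau ^ 2 := by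
    have hτ := tau_pos.ne'
    field_simp
    push_cast
    linear_combination (((a : ℝ) + b) * tau - b) * tau_sq
  have hceil : ⌈((a + 2 * b : ℤ) : ℝ) / tau⌉ = a + b := by
    rw [Int.ceil_eq_iff]
    have hlo := div_nonneg h₀ (sq_nonneg tau)
    have hhi := (div_lt_one (pow_pos tau_pos 2)).mpr h₁
    constructor <;> linarith
  refine ⟨a + 2 * b, ?_⟩
  rw [fibChain_eq_add_mul_tau, hceil]
  push_cast
  ring

theorem one_div_tau_ne_one : 1 / tau ≠ 1 := by
  rw [ne_eq, div_eq_one_iff_eq tau_pos.ne']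
  exact one_lt_tau.ne

theorem fibChain_succ_mem_iff (k : ℤ) :
    fibChain (k + 1) ∈ (fun x => tau ^ 2 * x) '' SigmaSet (Ico 0 (tau ^ 2)) ↔
      fibChain (k + 1) - fibChain k = 1 / tau := by
  rw [image_tau_sq_mul_sigmaSet_Ico_tau_sq, fibChain_mem_sigmaSet_iff, mem_Ico]
  rcases fibChain_succ_cases k with ⟨hgap, hstar⟩ | ⟨hgap, hstar⟩
  · refine iff_of_true ⟨fibStar_nonneg _, ?_⟩ hgap
    linarith [fibStar_lt_tau_sq k, tau_sq]
  · refine iff_of_false (fun h => ?_) (hgap ▸ one_div_tau_ne_one.symm)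
    linarith [fibStar_nonneg k, h.2]

theorem fibChain_succ_sub_eq_one_iff (k : ℤ) :
    fibChain (k + 1) - fibChain k = 1 ↔
      fibChain (k + 1) ∉ (fun x => tau ^ 2 * x) '' SigmaSet (Ico 0 (tau ^ 2)) := by
  rw [fibChain_succ_mem_iff]
  rcases fibChain_succ_cases k with ⟨hgap, -⟩ | ⟨hgap, -⟩ <;> rw [hgap]
  · simpa using one_div_tau_ne_one
  · simpa using one_div_tau_ne_one.symm

/-- `λ_m ∈ τ²Λ` iff `λ_m - λ_{m-1} = 1/τ`; equivalently
`τ²Λ = Λ_S + 1/τ`, and `{λ_n : λ_{n+1} ∉ τ²Λ} = Λ_L`. -/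
theorem statement15 :
    (∀ m : ℤ,
      fibChain m ∈ (fun x => tau ^ 2 * x) '' SigmaSet (Set.Ico 0 (tau ^ 2)) ↔
        fibChain m - fibChain (m - 1) = 1 / tau) ∧
    (fun x => tau ^ 2 * x) '' SigmaSet (Set.Ico 0 (tau ^ 2)) =
      (fun x => x + 1 / tau) ''
        {y : ℝ | ∃ k : ℤ, y = fibChain k ∧ fibChain (k + 1) - fibChain k = 1 / tau} ∧
    {y : ℝ | ∃ n : ℤ, y = fibChain n ∧
        fibChain (n + 1) ∉ (fun x => tau ^ 2 * x) '' SigmaSet (Set.Ico 0 (tau ^ 2))} =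
      {y : ℝ | ∃ n : ℤ, y = fibChain n ∧ fibChain (n + 1) - fibChain n = 1} := by
  refine ⟨fun m => by simpa using fibChain_succ_mem_iff (m - 1), ?_, ?_⟩
  · ext z
    constructor
    · intro hz
      have hsub : SigmaSet (Ico 0 1) ⊆ SigmaSet (Ico 0 (tau ^ 2)) :=
        sigmaSet_mono (Ico_subset_Ico_right (one_le_pow₀ one_lt_tau.le))
      obtain ⟨k, rfl⟩ :=
        exists_fibChain_eq (hsub (image_tau_sq_mul_sigmaSet_Ico_tau_sq ▸ hz))
      obtain ⟨n, rfl⟩ : ∃ n, k = n + 1 := ⟨k - 1, by ring⟩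
      have hgap := (fibChain_succ_mem_iff n).mp hz
      exact ⟨fibChain n, ⟨n, rfl, hgap⟩, by simp only; linarith⟩
    · rintro ⟨_, ⟨k, rfl, hk⟩, rfl⟩
      show fibChain k + 1 / tau ∈ _
      rw [show fibChain k + 1 / tau = fibChain (k + 1) by linarith]
      exact (fibChain_succ_mem_iff k).mpr hk
  · simp only [fibChain_succ_sub_eq_one_iff]
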